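/- For any integer n ≥ 3, let G be an edge-colored complete 3-partite 3-uniform hypergraph K^{(3)}_{n,n,n} with partite sets V_1, V_2, V_3 that is rainbow 𝒯-free and uses at least 3 colors, say |C(G)| = k ≥ 3. Then at least one of the following holds: (i) some partite set V_ℓ can be partitioned into k parts V_{ℓ,1}, V_{ℓ,2}, ..., V_{ℓ,k} such that for each i ∈ {1,...,k}, every edge containing a vertex of V_{ℓ,i} has color i; (ii) after renumbering the colors as 1,...,k, for every ℓ ∈ {1,2,3} the set V_ℓ can be partitioned into k−1 parts V_{ℓ,2}, V_{ℓ,3}, ..., V_{ℓ,k} such that for every i ∈ {2,...,k} every edge contained in V_{1,i} ∪ V_{2,i} ∪ V_{3,i} has color 1 or i, and every other edge has color 1. -/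

import Mathlib

/-!
Rainbow-𝒯-freeness is a condition on the slices of `K^{(3)}_{n,n,n}`, the `n × n` grids of edges
through a fixed vertex: a tight path visits the parts in the order `p q r p q`, so its three edges
form a corner (two cells in a row, two in a column) of the grid through its middle vertex, and no
such corner may be rainbow. A grid without rainbow corners is constant along rows, constant along
columns, or two-coloured. Propagating through the slices, a link with three colours forces the
colouring to depend on a single part, which is (i). Otherwise every link has at most two colours,
and each part has two distinct links since it sees all `k ≥ 3` colours; intersecting the links of
the three vertices of each edge then yields a colour `π` lying in every link. So each vertex has
at most one further colour, an edge not coloured `π` has the further colour of all three of its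
vertices, and grouping the vertices by further colour gives (ii).
-/

/-- An edge of the complete 3-partite 3-graph `K^{(3)}_{n,n,n}` (with partite sets
`V_ℓ = {ℓ} × Fin n` for `ℓ : Fin 3`): a 3-set with exactly one vertex in each partite set. -/
def IsTriEdge {n : ℕ} (e : Finset (Fin 3 × Fin n)) : Prop :=
  e.card = 3 ∧ e.image Prod.fst = Finset.univ

/-- The set of colors appearing on the edges of an edge-colored `K^{(3)}_{n,n,n}`. -/
def triColorFinset {n : ℕ} (c : Finset (Fin 3 × Fin n) → ℕ) : Finset ℕ :=
  ((Finset.univ : Finset (Finset (Fin 3 × Fin n))).filter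
    (fun e => e.card = 3 ∧ e.image Prod.fst = Finset.univ)).image c

/-- There is a rainbow tight path `𝒯` (edges `v₁v₂v₃, v₂v₃v₄, v₃v₄v₅`) in the
edge-colored `K^{(3)}_{n,n,n}`. -/
def HasRainbowTightTri {n : ℕ} (c : Finset (Fin 3 × Fin n) → ℕ) : Prop :=
  ∃ v : Fin 5 → Fin 3 × Fin n, Function.Injective v ∧
    IsTriEdge {v 0, v 1, v 2} ∧ IsTriEdge {v 1, v 2, v 3} ∧ IsTriEdge {v 2, v 3, v 4} ∧
    c {v 0, v 1, v 2} ≠ c {v 1, v 2, v 3} ∧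
    c {v 0, v 1, v 2} ≠ c {v 2, v 3, v 4} ∧
    c {v 1, v 2, v 3} ≠ c {v 2, v 3, v 4}

open Finset

section Palettes

variable {ι α β γ κ : Type*}

theorem exists_ne_of_forall_mem {P : α → Finset κ} (hP : ∀ a, (P a).card ≤ 2)
    (v : ι → α) (D : ι → κ) (hD : ∀ i, D i ∈ P (v i))
    (h₃ : ¬∃ S : Finset κ, S.card ≤ 2 ∧ ∀ i, D i ∈ S) : ∃ a a', P a ≠ P a' := by
  by_contra! hP'
  apply h₃
  rcases isEmpty_or_nonempty ι with hι | ⟨⟨i⟩⟩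
  · exact ⟨∅, by simp, isEmptyElim⟩
  · exact ⟨P (v i), hP _, fun j => hP' (v j) (v i) ▸ hD j⟩

variable [DecidableEq κ]

theorem Finset.eq_pair_of_card_le_two {s : Finset κ} {a b : κ} (hs : s.card ≤ 2) (ha : a ∈ s)
    (hb : b ∈ s) (hab : a ≠ b) : s = {a, b} :=
  (eq_of_subset_of_card_le (insert_subset ha (singleton_subset_iff.2 hb))
    (by rwa [card_pair hab])).symm

theorem Finset.eq_of_mem_inter_of_ne {s t : Finset κ} {a b : κ} (hs : s.card ≤ 2)
    (ht : t.card ≤ 2) (hst : s ≠ t) (ha : a ∈ s ∩ t) (hb : b ∈ s ∩ t) : a = b := by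
  rw [mem_inter] at ha hb
  by_contra hab
  exact hst ((eq_pair_of_card_le_two hs ha.1 hb.1 hab).trans
    (eq_pair_of_card_le_two ht ha.2 hb.2 hab).symm)

theorem Finset.exists_subset_pair_of_card_le_two {s : Finset κ} {a : κ} (hs : s.card ≤ 2)
    (ha : a ∈ s) : ∃ b, s ⊆ {a, b} := by
  have : Nonempty κ := ⟨a⟩
  obtain ⟨b, hb⟩ := card_le_one_iff_subset_singleton.1
    (by rw [card_erase_of_mem ha]; omega : (s.erase a).card ≤ 1)
  exact ⟨b, insert_erase ha ▸ insert_subset_insert a hb⟩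

theorem Finset.insert_insert_singleton_rotate (a b c : κ) :
    ({a, b, c} : Finset κ) = {b, c, a} := by
  rw [pair_comm c a, insert_comm]

variable {P : α → Finset κ} {Q : β → Finset κ} {R : γ → Finset κ}

theorem inter_inter_nonempty_of_ne (hQ : ∀ y, (Q y).card ≤ 2) (hR : ∀ z, (R z).card ≤ 2)
    (hPQR : ∀ x y z, (P x ∩ Q y ∩ R z).Nonempty) (hR₂ : ∃ z z', R z ≠ R z')
    (x x' : α) (y : β) : (P x ∩ P x' ∩ Q y).Nonempty := by
  by_contra hempty
  obtain ⟨z₁, z₂, hz⟩ := hR₂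
  -- otherwise `Q y` shares two distinct colours with every `R z`, so all `R z` equal `Q y`
  have hRQ : ∀ z, R z = Q y := by
    intro z
    obtain ⟨u, hu⟩ := hPQR x y z
    obtain ⟨u', hu'⟩ := hPQR x' y z
    simp only [mem_inter] at hu hu'
    have huu' : u ≠ u' := by
      rintro rfl
      exact hempty ⟨u, by simp [hu.1.1, hu'.1.1, hu.1.2]⟩
    rw [eq_pair_of_card_le_two (hR z) hu.2 hu'.2 huu',
      eq_pair_of_card_le_two (hQ y) hu.1.2 hu'.1.2 huu']
  exact hz ((hRQ z₁).trans (hRQ z₂).symm)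

theorem forall_mem_of_mem_inter_of_ne (hP : ∀ x, (P x).card ≤ 2) (hQ : ∀ y, (Q y).card ≤ 2)
    (hR : ∀ z, (R z).card ≤ 2) (hPQR : ∀ x y z, (P x ∩ Q y ∩ R z).Nonempty)
    (hR₂ : ∃ z z', R z ≠ R z') {x x' : α} (hx : P x ≠ P x') {π : κ} (hπ : π ∈ P x ∩ P x')
    (y : β) : π ∈ Q y := by
  obtain ⟨u, hu⟩ := inter_inter_nonempty_of_ne hQ hR hPQR hR₂ x x' y
  rw [mem_inter] at hu
  exact eq_of_mem_inter_of_ne (hP x) (hP x') hx hu.1 hπ ▸ hu.2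

theorem exists_forall_mem_of_inter_nonempty (hP : ∀ x, (P x).card ≤ 2)
    (hQ : ∀ y, (Q y).card ≤ 2) (hR : ∀ z, (R z).card ≤ 2)
    (hPQR : ∀ x y z, (P x ∩ Q y ∩ R z).Nonempty) (hP₂ : ∃ x x', P x ≠ P x')
    (hQ₂ : ∃ y y', Q y ≠ Q y') (hR₂ : ∃ z z', R z ≠ R z') :
    ∃ π, (∀ x, π ∈ P x) ∧ (∀ y, π ∈ Q y) ∧ ∀ z, π ∈ R z := by
  obtain ⟨x₁, x₂, hx⟩ := hP₂
  obtain ⟨y₁, y₂, hy⟩ := hQ₂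
  obtain ⟨π, hπ⟩ := inter_inter_nonempty_of_ne hQ hR hPQR hR₂ x₁ x₂ y₁
  rw [mem_inter] at hπ
  have hπQ := forall_mem_of_mem_inter_of_ne hP hQ hR hPQR hR₂ hx hπ.1
  have hπR := forall_mem_of_mem_inter_of_ne hP hR hQ
    (fun x z y => by rw [inter_right_comm]; exact hPQR x y z) ⟨y₁, y₂, hy⟩ hx hπ.1
  have hπP := forall_mem_of_mem_inter_of_ne hQ hP hR
    (fun y x z => by rw [inter_comm (Q y)]; exact hPQR x y z) hR₂ hy
    (mem_inter.2 ⟨hπQ y₁, hπQ y₂⟩)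
  exact ⟨π, hπP, hπQ, hπR⟩

end Palettes

section Grid

variable {α β γ κ : Type*}

def NoRainbowCorner (f : α → β → κ) : Prop :=
  ∀ x x' y y', f x y ≠ f x y' → f x' y = f x y ∨ f x' y = f x y'

theorem NoRainbowCorner.swap {f : α → β → κ} (h : NoRainbowCorner f) :
    NoRainbowCorner (Function.swap f) := by
  intro y y' x x' hne
  by_contra! h'
  rcases h x x' y y' h'.1.symm with h'' | h''
  · exact hne h''.symm
  · exact h'.2 h''.symm

variable {d : α → β → γ → κ}

def NoRainbowTightPath (d : α → β → γ → κ) : Prop :=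
  (∀ z, NoRainbowCorner fun x y => d x y z) ∧ (∀ y, NoRainbowCorner fun x z => d x y z) ∧
    ∀ x, NoRainbowCorner fun y z => d x y z

theorem NoRainbowTightPath.rotate (hd : NoRainbowTightPath d) :
    NoRainbowTightPath fun y z x => d x y z :=
  ⟨hd.2.2, fun z => (hd.1 z).swap, fun y => (hd.2.1 y).swap⟩

variable [DecidableEq κ]

theorem NoRainbowCorner.trichotomy {f : α → β → κ} (h : NoRainbowCorner f) :
    (∀ x y y', f x y = f x y') ∨ (∀ x x' y, f x y = f x' y) ∨
      ∃ S : Finset κ, S.card ≤ 2 ∧ ∀ x y, f x y ∈ S := by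
  by_cases hrow : ∀ x y y', f x y = f x y'
  · exact Or.inl hrow
  push Not at hrow
  obtain ⟨x₀, y₁, y₂, h₁₂⟩ := hrow
  by_cases h₃ : ∃ y₃, f x₀ y₃ ≠ f x₀ y₁ ∧ f x₀ y₃ ≠ f x₀ y₂
  · obtain ⟨y₃, h₃₁, h₃₂⟩ := h₃
    -- a column with two colours would confine the three colours of row `x₀` to two values
    have hcol : ∀ x y, f x y = f x₀ y := by
      intro x y
      by_contra hne
      have h₁ := h.swap y y₁ x₀ x (Ne.symm hne)
      have h₂ := h.swap y y₂ x₀ x (Ne.symm hne)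
      have h₃ := h.swap y y₃ x₀ x (Ne.symm hne)
      simp only [Function.swap] at h₁ h₂ h₃
      grind
    exact Or.inr (Or.inl fun x x' y => (hcol x y).trans (hcol x' y).symm)
  · push Not at h₃
    refine Or.inr (Or.inr ⟨{f x₀ y₁, f x₀ y₂}, card_le_two, fun x y => ?_⟩)
    by_cases hy : f x₀ y = f x₀ y₁
    · rcases h x₀ x y y₂ (hy ▸ h₁₂) with h' | h' <;> simp [h', hy]
    · rcases h x₀ x y y₁ hy with h' | h' <;> simp [h', h₃ y hy]

theorem forall_eq_of_slice_rows (hd : ∀ y, NoRainbowCorner fun x z => d x y z) {z₀ : γ}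
    (hrow : ∀ x y y', d x y z₀ = d x y' z₀)
    (h₃ : ¬∃ S : Finset κ, S.card ≤ 2 ∧ ∀ x y, d x y z₀ ∈ S) :
    ∀ x y z y' z', d x y z = d x y' z' := by
  suffices h : ∀ x y z, d x y z = d x y z₀ from
    fun x y z y' z' => (h x y z).trans ((hrow x y y').trans (h x y' z').symm)
  intro x y z
  rcases (hd y).trichotomy with h | h | ⟨S, hS, h⟩
  · exact h x z z₀
  · exact (h₃ ⟨{d x y z₀}, by simp, fun x' y' => by
      simp [hrow x' y' y, h x' x z₀]⟩).elim
  · exact (h₃ ⟨S, hS, fun x' y' => hrow x' y y' ▸ h x' z₀⟩).elim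

theorem NoRainbowTightPath.dependsOnly_of_slice (hd : NoRainbowTightPath d) {z₀ : γ}
    (h₃ : ¬∃ S : Finset κ, S.card ≤ 2 ∧ ∀ x y, d x y z₀ ∈ S) :
    (∀ x y z y' z', d x y z = d x y' z') ∨ ∀ x y z x' z', d x y z = d x' y z' := by
  rcases (hd.1 z₀).trichotomy with h | h | h
  · exact Or.inl (forall_eq_of_slice_rows hd.2.1 h h₃)
  · refine Or.inr fun x y z x' z' =>
      forall_eq_of_slice_rows (d := fun y x z => d x y z) hd.2.2 (fun y x x' => h x x' y)
        (fun ⟨S, hS, hS'⟩ => h₃ ⟨S, hS, fun x y => hS' y x⟩) y x z x' z'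
  · exact (h₃ h).elim

theorem exists_common_colour
    (hP : ∀ x, ∃ S : Finset κ, S.card ≤ 2 ∧ ∀ y z, d x y z ∈ S)
    (hQ : ∀ y, ∃ S : Finset κ, S.card ≤ 2 ∧ ∀ z x, d x y z ∈ S)
    (hR : ∀ z, ∃ S : Finset κ, S.card ≤ 2 ∧ ∀ x y, d x y z ∈ S)
    (h₃ : ¬∃ S : Finset κ, S.card ≤ 2 ∧ ∀ x y z, d x y z ∈ S) :
    ∃ (π : κ) (g₀ : α → κ) (g₁ : β → κ) (g₂ : γ → κ),
      ∀ x y z, d x y z = π ∨ d x y z = g₀ x ∧ d x y z = g₁ y ∧ d x y z = g₂ z := by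
  choose P hPc hPd using hP
  choose Q hQc hQd using hQ
  choose R hRc hRd using hR
  have h₃' : ¬∃ S : Finset κ, S.card ≤ 2 ∧ ∀ p : α × β × γ, d p.1 p.2.1 p.2.2 ∈ S :=
    fun ⟨S, hS, hS'⟩ => h₃ ⟨S, hS, fun x y z => hS' (x, y, z)⟩
  obtain ⟨π, hπP, hπQ, hπR⟩ := exists_forall_mem_of_inter_nonempty hPc hQc hRc
    (fun x y z => ⟨d x y z, by simp [hPd, hQd, hRd]⟩)
    (exists_ne_of_forall_mem hPc (fun p : α × β × γ => p.1) _
      (fun p => hPd p.1 p.2.1 p.2.2) h₃')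
    (exists_ne_of_forall_mem hQc (fun p => p.2.1) _ (fun p => hQd p.2.1 p.2.2 p.1) h₃')
    (exists_ne_of_forall_mem hRc (fun p => p.2.2) _ (fun p => hRd p.2.2 p.1 p.2.1) h₃')
  choose g₀ hg₀ using fun x => exists_subset_pair_of_card_le_two (hPc x) (hπP x)
  choose g₁ hg₁ using fun y => exists_subset_pair_of_card_le_two (hQc y) (hπQ y)
  choose g₂ hg₂ using fun z => exists_subset_pair_of_card_le_two (hRc z) (hπR z)
  refine ⟨π, g₀, g₁, g₂, fun x y z => ?_⟩
  have h₀ := hg₀ x (hPd x y z)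
  have h₁ := hg₁ y (hQd y z x)
  have h₂ := hg₂ z (hRd z x y)
  simp only [mem_insert, mem_singleton] at h₀ h₁ h₂
  grind

theorem NoRainbowTightPath.dichotomy (hd : NoRainbowTightPath d)
    (h₃ : ¬∃ S : Finset κ, S.card ≤ 2 ∧ ∀ x y z, d x y z ∈ S) :
    (∀ x y z y' z', d x y z = d x y' z') ∨ (∀ x y z x' z', d x y z = d x' y z') ∨
      (∀ x y z x' y', d x y z = d x' y' z) ∨
      ∃ (π : κ) (g₀ : α → κ) (g₁ : β → κ) (g₂ : γ → κ), (∃ x y z, d x y z = π) ∧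
        ∀ x y z, d x y z = π ∨ d x y z = g₀ x ∧ d x y z = g₁ y ∧ d x y z = g₂ z := by
  by_cases hR : ∃ z, ¬∃ S : Finset κ, S.card ≤ 2 ∧ ∀ x y, d x y z ∈ S
  · obtain ⟨z, hz⟩ := hR
    rcases hd.dependsOnly_of_slice hz with h | h
    · exact Or.inl h
    · exact Or.inr (Or.inl h)
  by_cases hP : ∃ x, ¬∃ S : Finset κ, S.card ≤ 2 ∧ ∀ y z, d x y z ∈ S
  · obtain ⟨x, hx⟩ := hP
    rcases hd.rotate.dependsOnly_of_slice hx with h | h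
    · exact Or.inr (Or.inl fun x y z x' z' => h y z x z' x')
    · exact Or.inr (Or.inr (Or.inl fun x y z x' y' => h y z x y' x'))
  by_cases hQ : ∃ y, ¬∃ S : Finset κ, S.card ≤ 2 ∧ ∀ z x, d x y z ∈ S
  · obtain ⟨y, hy⟩ := hQ
    rcases hd.rotate.rotate.dependsOnly_of_slice hy with h | h
    · exact Or.inr (Or.inr (Or.inl fun x y z x' y' => h z x y x' y'))
    · exact Or.inl fun x y z y' z' => h z x y z' y'
  push Not at hP hQ hR
  obtain ⟨π, g₀, g₁, g₂, h⟩ := exists_common_colour hP hQ hR h₃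
  by_cases hπ : ∃ x y z, d x y z = π
  · exact Or.inr (Or.inr (Or.inr ⟨π, g₀, g₁, g₂, hπ, h⟩))
  · push Not at hπ
    -- without the colour `π`, every edge has the further colour of its first vertex
    refine Or.inl fun x y z y' z' => ?_
    rw [((h x y z).resolve_left (hπ x y z)).1, ((h x y' z').resolve_left (hπ x y' z')).1]

end Grid

section Renumbering

variable {κ : Type*} [DecidableEq κ]

theorem exists_renumbering {C : Finset κ} {π : κ} (hπ : π ∈ C) :
    ∃ σ : κ → ℕ, Set.InjOn σ C ∧ σ π = 1 ∧ (∀ t, σ t ≤ C.card) ∧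
      ∀ t ∈ C, t ≠ π → 2 ≤ σ t := by
  let e := (C.erase π).equivFin
  have hcard : (C.erase π).card + 1 = C.card := card_erase_add_one hπ
  refine ⟨fun t => if h : t ∈ C.erase π then e ⟨t, h⟩ + 2 else 1, ?_, by simp, ?_, ?_⟩
  · intro s hs t ht hst
    by_cases hs' : s ∈ C.erase π <;> by_cases ht' : t ∈ C.erase π <;>
      simp only [hs', ht', dif_pos, dif_neg, not_false_eq_true] at hst
    · exact congrArg Subtype.val
        (e.injective (a₁ := ⟨s, hs'⟩) (a₂ := ⟨t, ht'⟩) (Fin.ext (by omega)))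
    · omega
    · omega
    · simp only [mem_erase, not_and_or, not_not] at hs' ht'
      exact (hs'.resolve_right (not_not.2 hs)).trans (ht'.resolve_right (not_not.2 ht)).symm
  · intro t
    dsimp only
    split_ifs with h
    · have := (e ⟨t, h⟩).isLt
      omega
    · exact card_pos.2 ⟨π, hπ⟩
  · intro t ht htπ
    simp [mem_erase.2 ⟨htπ, ht⟩]

end Renumbering

section Edges

variable {n : ℕ}

def tri (x y z : Fin n) : Finset (Fin 3 × Fin n) :=
  {(0, x), (1, y), (2, z)}

theorem isTriEdge_of_ne {p q r : Fin 3} (hpq : p ≠ q) (hpr : p ≠ r) (hqr : q ≠ r)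
    (a b e : Fin n) : IsTriEdge ({(p, a), (q, b), (r, e)} : Finset (Fin 3 × Fin n)) := by
  refine ⟨card_eq_three.2 ⟨_, _, _, by simp [hpq], by simp [hpr], by simp [hqr], rfl⟩, ?_⟩
  rw [image_insert, image_insert, image_singleton]
  exact eq_univ_of_card _ (card_eq_three.2 ⟨_, _, _, hpq, hpr, hqr, rfl⟩)

theorem isTriEdge_tri (x y z : Fin n) : IsTriEdge (tri x y z) :=
  isTriEdge_of_ne (by decide) (by decide) (by decide) x y z

theorem isTriEdge_iff {e : Finset (Fin 3 × Fin n)} :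
    IsTriEdge e ↔ ∃ x y z, e = tri x y z := by
  constructor
  · rintro ⟨hcard, himage⟩
    have hmem : ∀ ℓ, ∃ w, (ℓ, w) ∈ e := fun ℓ => by
      obtain ⟨u, hu, rfl⟩ := mem_image.1 (himage ▸ mem_univ ℓ)
      exact ⟨u.2, hu⟩
    choose w hw using hmem
    refine ⟨w 0, w 1, w 2, (eq_of_subset_of_card_le ?_ ?_).symm⟩
    · simp [tri, insert_subset_iff, hw]
    · rw [hcard, (isTriEdge_tri _ _ _).1]
  · rintro ⟨x, y, z, rfl⟩
    exact isTriEdge_tri x y z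

theorem mem_tri {x y z w : Fin n} {ℓ : Fin 3} : (ℓ, w) ∈ tri x y z ↔ w = ![x, y, z] ℓ := by
  fin_cases ℓ <;> simp [tri, eq_comm]

theorem mem_triColorFinset {c : Finset (Fin 3 × Fin n) → ℕ} {t : ℕ} :
    t ∈ triColorFinset c ↔ ∃ x y z, c (tri x y z) = t := by
  simp only [triColorFinset, mem_image, mem_filter, mem_univ, true_and]
  refine ⟨fun ⟨e, he, het⟩ => ?_, fun ⟨x, y, z, h⟩ => ⟨tri x y z, isTriEdge_tri x y z, h⟩⟩
  obtain ⟨x, y, z, rfl⟩ := isTriEdge_iff.1 he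
  exact ⟨x, y, z, het⟩

variable {c : Finset (Fin 3 × Fin n) → ℕ}

theorem noRainbowCorner_of_not_hasRainbowTightTri (hfree : ¬HasRainbowTightTri c)
    {p q r : Fin 3} (hpq : p ≠ q) (hpr : p ≠ r) (hqr : q ≠ r) (e : Fin n) :
    NoRainbowCorner fun a b => c {(p, a), (q, b), (r, e)} := by
  intro a a' b b' hne
  by_contra! h
  have ha : a ≠ a' := by rintro rfl; exact h.1 rfl
  have hb : b ≠ b' := by rintro rfl; exact hne rfl
  -- the corner `(a', b), (a, b), (a, b')` is the tight path `(p,a') (q,b) (r,e) (p,a) (q,b')`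
  refine hfree ⟨![(p, a'), (q, b), (r, e), (p, a), (q, b')], ?_, ?_, ?_, ?_, ?_, ?_, ?_⟩
  · intro i j hij
    fin_cases i <;> fin_cases j <;> simp_all [Prod.ext_iff, eq_comm]
  all_goals simp only [Fin.isValue, Matrix.cons_val, ← insert_insert_singleton_rotate (p, a),
    insert_insert_singleton_rotate (r, e) (p, a)]
  · exact isTriEdge_of_ne hpq hpr hqr a' b e
  · exact isTriEdge_of_ne hpq hpr hqr a b e
  · exact isTriEdge_of_ne hpq hpr hqr a b' e
  · exact h.1
  · exact h.2
  · exact hne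

theorem noRainbowTightPath_of_not_hasRainbowTightTri (hfree : ¬HasRainbowTightTri c) :
    NoRainbowTightPath fun x y z => c (tri x y z) := by
  refine ⟨fun z => ?_, fun y => ?_, fun x => ?_⟩
  · exact noRainbowCorner_of_not_hasRainbowTightTri hfree (by decide) (by decide) (by decide) z
  · simpa only [tri, pair_comm] using
      noRainbowCorner_of_not_hasRainbowTightTri hfree (p := 0) (q := 2) (r := 1)
        (by decide) (by decide) (by decide) y
  · simpa only [tri, insert_insert_singleton_rotate] using
      noRainbowCorner_of_not_hasRainbowTightTri hfree (p := 1) (q := 2) (r := 0)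
        (by decide) (by decide) (by decide) x

theorem colour_eq_of_forall_tri (ℓ : Fin 3) {g : Fin n → ℕ}
    (h : ∀ x y z, c (tri x y z) = g (![x, y, z] ℓ)) :
    ∀ e : Finset (Fin 3 × Fin n), IsTriEdge e → ∀ w : Fin n, (ℓ, w) ∈ e → c e = g w := by
  intro e he w hw
  obtain ⟨x, y, z, rfl⟩ := isTriEdge_iff.1 he
  rw [mem_tri.1 hw]
  exact h x y z

theorem exists_partition_of_common_colour {k : ℕ} (hk : k = (triColorFinset c).card)
    (hk2 : 2 ≤ k) {π : ℕ} (hπ : π ∈ triColorFinset c) (g : Fin 3 → Fin n → ℕ)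
    (hg : ∀ e : Finset (Fin 3 × Fin n), IsTriEdge e → c e = π ∨ ∀ u ∈ e, c e = g u.1 u.2) :
    ∃ σ : ℕ → ℕ,
      Set.InjOn σ (triColorFinset c : Set ℕ) ∧
      (∀ e : Finset (Fin 3 × Fin n), IsTriEdge e → σ (c e) ∈ Finset.Icc 1 k) ∧
      ∃ P : Fin 3 → ℕ → Finset (Fin n),
        (∀ ℓ : Fin 3, ∀ i ∈ Finset.Icc 2 k, ∀ j ∈ Finset.Icc 2 k, i ≠ j →
          Disjoint (P ℓ i) (P ℓ j)) ∧
        (∀ ℓ : Fin 3, ∀ w : Fin n, ∃ i ∈ Finset.Icc 2 k, w ∈ P ℓ i) ∧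
        (∀ i ∈ Finset.Icc 2 k, ∀ e : Finset (Fin 3 × Fin n), IsTriEdge e →
          (∀ x ∈ e, x.2 ∈ P x.1 i) → σ (c e) = 1 ∨ σ (c e) = i) ∧
        (∀ e : Finset (Fin 3 × Fin n), IsTriEdge e →
          (∀ i ∈ Finset.Icc 2 k, ¬ (∀ x ∈ e, x.2 ∈ P x.1 i)) → σ (c e) = 1) := by
  obtain ⟨σ, hinj, hσπ, hσk, hσ2⟩ := exists_renumbering hπ
  rw [← hk] at hσk
  have hcolour : ∀ e, IsTriEdge e → c e ∈ triColorFinset c := fun e he => by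
    obtain ⟨x, y, z, rfl⟩ := isTriEdge_iff.1 he
    exact mem_triColorFinset.2 ⟨x, y, z, rfl⟩
  -- vertices whose edges all have colour `π` are put into the class `2`
  have hcls : ∀ t, max 2 (σ t) ∈ Icc 2 k := fun t =>
    mem_Icc.2 ⟨le_max_left _ _, max_le hk2 (hσk t)⟩
  have hcls_eq : ∀ e, IsTriEdge e → c e ≠ π → max 2 (σ (c e)) = σ (c e) := fun e he hπe =>
    max_eq_right (hσ2 _ (hcolour e he) hπe)
  refine ⟨σ, hinj, fun e he => ?_, fun ℓ i => univ.filter fun v => max 2 (σ (g ℓ v)) = i,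
    ?_, fun ℓ w => ⟨_, hcls (g ℓ w), by simp⟩, fun i _ e he hin => ?_, fun e he hout => ?_⟩
  · by_cases hπe : c e = π
    · simp [hπe, hσπ]; omega
    · have := hσ2 _ (hcolour e he) hπe
      exact mem_Icc.2 ⟨by omega, hσk _⟩
  · intro ℓ i _ j _ hij
    exact disjoint_filter.2 fun v _ hi hj => hij (hi ▸ hj)
  · by_cases hπe : c e = π
    · exact Or.inl (hπe ▸ hσπ)
    obtain ⟨u, hu⟩ := card_pos.1 (by rw [he.1]; omega : 0 < e.card)
    have hu' := hin u hu
    simp only [mem_filter, mem_univ, true_and, ← (hg e he).resolve_left hπe u hu] at hu'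
    exact Or.inr (hu' ▸ hcls_eq e he hπe).symm
  · rcases hg e he with hπe | hge
    · exact hπe ▸ hσπ
    · by_contra hπe
      apply hout _ (hcls (c e))
      intro u hu
      simp [← hge u hu]

end Edges

theorem tight_path_structure_tripartite_general (n : ℕ)
    (c : Finset (Fin 3 × Fin n) → ℕ) (hfree : ¬ HasRainbowTightTri c)
    (k : ℕ) (hk : k = (triColorFinset c).card) (hk3 : 3 ≤ k) :
    (∃ ℓ : Fin 3, ∃ g : Fin n → ℕ,
      ∀ e : Finset (Fin 3 × Fin n), IsTriEdge e →
        ∀ w : Fin n, (ℓ, w) ∈ e → c e = g w) ∨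
    (∃ σ : ℕ → ℕ,
      Set.InjOn σ (triColorFinset c : Set ℕ) ∧
      (∀ e : Finset (Fin 3 × Fin n), IsTriEdge e → σ (c e) ∈ Finset.Icc 1 k) ∧
      ∃ P : Fin 3 → ℕ → Finset (Fin n),
        (∀ ℓ : Fin 3, ∀ i ∈ Finset.Icc 2 k, ∀ j ∈ Finset.Icc 2 k, i ≠ j →
          Disjoint (P ℓ i) (P ℓ j)) ∧
        (∀ ℓ : Fin 3, ∀ w : Fin n, ∃ i ∈ Finset.Icc 2 k, w ∈ P ℓ i) ∧
        (∀ i ∈ Finset.Icc 2 k, ∀ e : Finset (Fin 3 × Fin n), IsTriEdge e →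
          (∀ x ∈ e, x.2 ∈ P x.1 i) → σ (c e) = 1 ∨ σ (c e) = i) ∧
        (∀ e : Finset (Fin 3 × Fin n), IsTriEdge e →
          (∀ i ∈ Finset.Icc 2 k, ¬ (∀ x ∈ e, x.2 ∈ P x.1 i)) → σ (c e) = 1)) := by
  have h₃ : ¬∃ S : Finset ℕ, S.card ≤ 2 ∧ ∀ x y z, c (tri x y z) ∈ S := fun ⟨S, hS, hcS⟩ => by
    have : triColorFinset c ⊆ S := fun t ht => by
      obtain ⟨x, y, z, rfl⟩ := mem_triColorFinset.1 ht
      exact hcS x y z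
    have := card_le_card this
    omega
  rcases (noRainbowTightPath_of_not_hasRainbowTightTri hfree).dichotomy h₃ with
    h | h | h | ⟨π, g₀, g₁, g₂, ⟨x, y, z, hπ⟩, hg⟩
  · exact Or.inl ⟨0, fun w => c (tri w w w), colour_eq_of_forall_tri 0 fun x y z => h x y z x x⟩
  · exact Or.inl ⟨1, fun w => c (tri w w w), colour_eq_of_forall_tri 1 fun x y z => h x y z y y⟩
  · exact Or.inl ⟨2, fun w => c (tri w w w), colour_eq_of_forall_tri 2 fun x y z => h x y z z z⟩
  · refine Or.inr (exists_partition_of_common_colour hk (by omega)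
      (mem_triColorFinset.2 ⟨x, y, z, hπ⟩) ![g₀, g₁, g₂] fun e he => ?_)
    obtain ⟨x, y, z, rfl⟩ := isTriEdge_iff.1 he
    simpa [tri] using hg x y z

/-- Structure theorem for rainbow-`𝒯`-free colorings of `K^{(3)}_{n,n,n}` (`n ≥ 3`)
with `k = |C(G)| ≥ 3` colors: either (i) some partite set `V_ℓ` can be partitioned into
`k` parts (the fibers of `g`) such that all edges containing a fixed vertex of `V_ℓ`
receive the color of that vertex; or (ii) after renumbering the colors as `1, …, k`
(via `σ`), each partite set `V_ℓ` partitions into parts `P ℓ i` (`i ∈ {2, …, k}`) such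
that edges inside `V_{1,i} ∪ V_{2,i} ∪ V_{3,i}` have color `1` or `i`, and all other
edges have color `1`. -/
theorem tight_path_structure_tripartite (n : ℕ) (hn : 3 ≤ n)
    (c : Finset (Fin 3 × Fin n) → ℕ) (hfree : ¬ HasRainbowTightTri c)
    (k : ℕ) (hk : k = (triColorFinset c).card) (hk3 : 3 ≤ k) :
    (∃ ℓ : Fin 3, ∃ g : Fin n → ℕ,
      ∀ e : Finset (Fin 3 × Fin n), IsTriEdge e →
        ∀ w : Fin n, (ℓ, w) ∈ e → c e = g w) ∨
    (∃ σ : ℕ → ℕ,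
      Set.InjOn σ (triColorFinset c : Set ℕ) ∧
      (∀ e : Finset (Fin 3 × Fin n), IsTriEdge e → σ (c e) ∈ Finset.Icc 1 k) ∧
      ∃ P : Fin 3 → ℕ → Finset (Fin n),
        (∀ ℓ : Fin 3, ∀ i ∈ Finset.Icc 2 k, ∀ j ∈ Finset.Icc 2 k, i ≠ j →
          Disjoint (P ℓ i) (P ℓ j)) ∧
        (∀ ℓ : Fin 3, ∀ w : Fin n, ∃ i ∈ Finset.Icc 2 k, w ∈ P ℓ i) ∧
        (∀ i ∈ Finset.Icc 2 k, ∀ e : Finset (Fin 3 × Fin n), IsTriEdge e →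
          (∀ x ∈ e, x.2 ∈ P x.1 i) → σ (c e) = 1 ∨ σ (c e) = i) ∧
        (∀ e : Finset (Fin 3 × Fin n), IsTriEdge e →
          (∀ i ∈ Finset.Icc 2 k, ¬ (∀ x ∈ e, x.2 ∈ P x.1 i)) → σ (c e) = 1)) :=
  tight_path_structure_tripartite_general n c hfree k hk hk3
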